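/- Let k ≥ 2, let x ∈ [0,1]^n be feasible for the strengthened LP of a k-column-sparse packing instance, let w ∈ ℝ_{≥0}^n, and let S include each item i independently with probability x_i/k. Let Alt'(T) = { i ∈ T : for every j ∈ N(i), Σ_{i' ∈ T : s_{i'j} ≥ s_{ij}} s_{i'j} ≤ 1 }. Then Alt'(S) is always feasible for the instance, and E[ Σ_{i ∈ Alt'(S)} w_i ] ≥ (1/k) · ( 1 − (1/k)(1 + (2/k)^{1/3}) )^k · Σ_{i=1}^n w_i x_i. (In particular, as k → ∞ this yields an (ek + o(k))-approximation for k-column-sparse packing integer programs relative to the strengthened LP optimum.) -/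

import Mathlib

open Finset
open scoped Classical BigOperators

/-- Probability of the subset `T` under the product distribution on subsets of
`Fin n` with marginal probabilities `q`. -/
noncomputable def prodP {n : ℕ} (q : Fin n → ℝ) (T : Finset (Fin n)) : ℝ :=
  (∏ i ∈ T, q i) * ∏ i ∈ Tᶜ, (1 - q i)

/-- Expectation of `g(S)` where `S` is drawn from the product distribution with
marginals `q`. -/
noncomputable def exV {n : ℕ} (q : Fin n → ℝ) (g : Finset (Fin n) → ℝ) : ℝ :=
  ∑ T : Finset (Fin n), prodP q T * g T

/-- The alteration map of the improved algorithm: keep `i ∈ T` iff for every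
constraint `j` in which `i` participates, the total size of the items of `T`
that are at least as large as `i` in constraint `j` is at most `1`. -/
noncomputable def altSet' {n m : ℕ} (s : Fin n → Fin m → ℝ) (T : Finset (Fin n)) :
    Finset (Fin n) :=
  T.filter (fun i => ∀ j, 0 < s i j →
    (∑ i' ∈ T.filter (fun i'' => s i j ≤ s i'' j), s i' j) ≤ 1)

/-! Feasibility: the load condition of the smallest kept item of a constraint bounds the total kept
load there.

Weight: condition on `i ∈ S`. The event that constraint `j` still has room for `i` depends only on
`S \ {i}` and is decreasing, so by Harris's inequality the at most `k` such events are positively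
correlated, and each fails with probability at most `(1 + ε) / k`, `ε = (2 / k) ^ (1/3)`. If
`s i j ≤ ε / 2` this is Markov's inequality for the LP constraint; otherwise a failure needs an item
of size `> 1/2` (expected number `≤ 1 / k` by the strengthened constraint) or two items of size
`> ε / 2` (expected number of pairs `≤ (2 / (ε k)) ^ 2 / 2 = ε / k`). -/

section ProductMeasure

variable {n : ℕ} {q : Fin n → ℝ}

lemma prodP_eq_prod_ite (T : Finset (Fin n)) :
    prodP q T = ∏ i, if i ∈ T then q i else 1 - q i := by
  rw [prod_ite, prodP]
  congr 1 <;> exact prod_congr (by ext; simp) fun _ _ => rfl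

lemma prodP_nonneg (hq : ∀ i, q i ∈ Set.Icc (0 : ℝ) 1) (T : Finset (Fin n)) :
    0 ≤ prodP q T := by
  rw [prodP_eq_prod_ite]
  refine prod_nonneg fun i _ => ?_
  split_ifs
  · exact (hq i).1
  · linarith [(hq i).2]

lemma sum_prodP : ∑ T, prodP q T = 1 := by
  simpa [prodP] using (Fintype.prod_add q (fun i => 1 - q i)).symm

lemma prodP_inter_mul_prodP_union (a b : Finset (Fin n)) :
    prodP q (a ∩ b) * prodP q (a ∪ b) = prodP q a * prodP q b := by
  simp only [prodP_eq_prod_ite, ← prod_mul_distrib]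
  refine prod_congr rfl fun i _ => ?_
  by_cases ha : i ∈ a <;> by_cases hb : i ∈ b <;> simp [ha, hb, mul_comm]

lemma one_sub_mul_prodP_insert {i : Fin n} {U : Finset (Fin n)} (hi : i ∉ U) :
    (1 - q i) * prodP q (insert i U) = q i * prodP q U := by
  simp only [prodP_eq_prod_ite, ← mul_prod_erase univ _ (mem_univ i), mem_insert_self, if_true,
    hi, if_false]
  have hrest : ∀ j ∈ univ.erase i,
      (if j ∈ insert i U then q j else 1 - q j) = if j ∈ U then q j else 1 - q j := by
    intro j hj
    simp [ne_of_mem_erase hj]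
  rw [prod_congr rfl hrest]
  ring

lemma sum_eq_sum_powerset_erase (i : Fin n) (F : Finset (Fin n) → ℝ) :
    ∑ T, F T = ∑ U ∈ (univ.erase i).powerset, (F U + F (insert i U)) := by
  rw [sum_add_distrib, ← sum_powerset_insert (notMem_erase i univ), insert_erase (mem_univ i),
    powerset_univ]

end ProductMeasure

section Expectation

variable {n : ℕ} {q : Fin n → ℝ}

lemma exV_const (c : ℝ) : exV q (fun _ => c) = c := by
  rw [exV, ← sum_mul, sum_prodP, one_mul]

lemma exV_add (f g : Finset (Fin n) → ℝ) :
    exV q (fun T => f T + g T) = exV q f + exV q g := by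
  simp only [exV, mul_add, sum_add_distrib]

lemma exV_const_mul (c : ℝ) (f : Finset (Fin n) → ℝ) :
    exV q (fun T => c * f T) = c * exV q f := by
  simp only [exV, mul_sum]
  exact sum_congr rfl fun _ _ => by ring

lemma exV_sum {ι : Type*} (A : Finset ι) (f : ι → Finset (Fin n) → ℝ) :
    exV q (fun T => ∑ a ∈ A, f a T) = ∑ a ∈ A, exV q (f a) := by
  simp only [exV, mul_sum]
  exact sum_comm

lemma exV_mono (hq : ∀ i, q i ∈ Set.Icc (0 : ℝ) 1) {f g : Finset (Fin n) → ℝ}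
    (h : ∀ T, f T ≤ g T) : exV q f ≤ exV q g :=
  sum_le_sum fun T _ => mul_le_mul_of_nonneg_left (h T) (prodP_nonneg hq T)

lemma exV_nonneg (hq : ∀ i, q i ∈ Set.Icc (0 : ℝ) 1) {f : Finset (Fin n) → ℝ} (hf : 0 ≤ f) :
    0 ≤ exV q f :=
  sum_nonneg fun T _ => mul_nonneg (prodP_nonneg hq T) (hf T)

lemma exV_ite_add_exV_ite_not (P : Finset (Fin n) → Prop) [DecidablePred P] :
    exV q (fun T => if P T then 1 else 0) + exV q (fun T => if ¬P T then 1 else 0) = 1 := by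
  rw [← exV_add]
  refine (congrArg (exV q) ?_).trans (exV_const 1)
  ext T
  split_ifs <;> simp_all

lemma exV_ite_le_exV (hq : ∀ i, q i ∈ Set.Icc (0 : ℝ) 1) {P : Finset (Fin n) → Prop}
    [DecidablePred P] {g : Finset (Fin n) → ℝ} (hg : 0 ≤ g) (h : ∀ T, P T → 1 ≤ g T) :
    exV q (fun T => if P T then 1 else 0) ≤ exV q g :=
  exV_mono hq fun T => by
    split_ifs with hT
    · exact h T hT
    · exact hg T

/-- Conditioning on `i ∈ S`: this event is independent of `S.erase i`. -/
lemma exV_ite_mem_erase (i : Fin n) (g : Finset (Fin n) → ℝ) :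
    exV q (fun T => if i ∈ T then g (T.erase i) else 0) = q i * exV q (fun T => g (T.erase i)) := by
  rw [exV, exV, sum_eq_sum_powerset_erase i, sum_eq_sum_powerset_erase i, mul_sum]
  refine sum_congr rfl fun U hU => ?_
  have hi : i ∉ U := fun h => notMem_erase i univ (mem_powerset.1 hU h)
  have hrel := one_sub_mul_prodP_insert (q := q) hi
  simp only [hi, if_false, mem_insert_self, if_true, erase_insert hi, erase_eq_of_notMem hi]
  linear_combination (g U) * hrel

lemma exV_ite_mem (i : Fin n) : exV q (fun T => if i ∈ T then 1 else 0) = q i := by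
  simpa [exV_const] using exV_ite_mem_erase (q := q) i (fun _ => 1)

lemma exV_ite_mem_and_mem {i i' : Fin n} (h : i ≠ i') :
    exV q (fun T => if i ∈ T ∧ i' ∈ T then 1 else 0) = q i * q i' := by
  have := exV_ite_mem_erase (q := q) i (fun U => if i' ∈ U then 1 else 0)
  simp only [mem_erase, Ne.symm h, ne_eq, not_false_eq_true, true_and, exV_ite_mem] at this
  rw [← this]
  congr 1
  ext T
  by_cases hiT : i ∈ T <;> simp [hiT]

lemma exV_sum_finset (F : Finset (Fin n) → Finset (Fin n)) (c : Fin n → ℝ) :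
    exV q (fun T => ∑ i ∈ F T, c i) = ∑ i, c i * exV q (fun T => if i ∈ F T then 1 else 0) := by
  have hsum : ∀ T, ∑ i ∈ F T, c i = ∑ i, c i * if i ∈ F T then 1 else 0 := fun T => by
    simp [mul_ite]
  simp only [hsum, exV_sum, exV_const_mul]

lemma exV_sum_mem (c : Fin n → ℝ) : exV q (fun T => ∑ i ∈ T, c i) = ∑ i, c i * q i := by
  simpa [exV_ite_mem] using exV_sum_finset (q := q) id c

lemma exV_card_filter (P : Fin n → Prop) [DecidablePred P] :
    exV q (fun T => ((T.filter P).card : ℝ)) = ∑ i with P i, q i := by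
  simp only [natCast_card_filter, exV_sum_mem, boole_mul, sum_filter]

lemma exV_card_offDiag_filter_le (hq : ∀ i, q i ∈ Set.Icc (0 : ℝ) 1)
    (P : Fin n → Prop) [DecidablePred P] :
    exV q (fun T => ((T.filter P).offDiag.card : ℝ)) ≤ (∑ i with P i, q i) ^ 2 := by
  have hcard : ∀ T : Finset (Fin n), ((T.filter P).offDiag.card : ℝ)
      = ∑ p ∈ (univ.filter P).offDiag, if p.1 ∈ T ∧ p.2 ∈ T then 1 else 0 := by
    intro T
    rw [← natCast_card_filter]
    congr 2
    ext p
    simp only [mem_offDiag, mem_filter, mem_univ, true_and]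
    tauto
  simp only [hcard, exV_sum]
  rw [sum_congr rfl fun p hp => exV_ite_mem_and_mem (mem_offDiag.1 hp).2.2, sq, sum_mul_sum,
    ← sum_product']
  exact sum_le_sum_of_subset_of_nonneg
    (fun p hp => mem_product.2 ⟨(mem_offDiag.1 hp).1, (mem_offDiag.1 hp).2.1⟩)
    fun p _ _ => mul_nonneg (hq p.1).1 (hq p.2).1

end Expectation

section Harris

variable {n : ℕ} {q : Fin n → ℝ}

/-- Harris's inequality, obtained from the FKG inequality on the order dual. -/
lemma exV_mul_exV_le_of_antitone (hq : ∀ i, q i ∈ Set.Icc (0 : ℝ) 1)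
    {f g : Finset (Fin n) → ℝ} (hf₀ : 0 ≤ f) (hg₀ : 0 ≤ g) (hf : Antitone f) (hg : Antitone g) :
    exV q f * exV q g ≤ exV q (fun T => f T * g T) := by
  have h := fkg (f ∘ OrderDual.ofDual) (g ∘ OrderDual.ofDual) (prodP q ∘ OrderDual.ofDual)
    (fun T => prodP_nonneg hq _) (fun T => hf₀ _) (fun T => hg₀ _) hf.dual_left hg.dual_left
    (fun a b => (prodP_inter_mul_prodP_union _ _).ge.trans_eq (mul_comm _ _))
  rw [show ∑ T : (Finset (Fin n))ᵒᵈ, (prodP q ∘ OrderDual.ofDual) T = 1 from sum_prodP,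
    one_mul] at h
  exact h

lemma prod_exV_le_exV_prod_of_antitone (hq : ∀ i, q i ∈ Set.Icc (0 : ℝ) 1) {ι : Type*}
    (J : Finset ι) {g : ι → Finset (Fin n) → ℝ} (hg₀ : ∀ j, 0 ≤ g j) (hg : ∀ j, Antitone (g j)) :
    ∏ j ∈ J, exV q (g j) ≤ exV q (fun T => ∏ j ∈ J, g j T) := by
  induction J using Finset.induction with
  | empty => simp [exV_const]
  | insert a J ha ih =>
    simp only [prod_insert ha]
    calc exV q (g a) * ∏ j ∈ J, exV q (g j)
        ≤ exV q (g a) * exV q (fun T => ∏ j ∈ J, g j T) :=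
          mul_le_mul_of_nonneg_left ih (exV_nonneg hq (hg₀ a))
      _ ≤ exV q (fun T => g a T * ∏ j ∈ J, g j T) :=
          exV_mul_exV_le_of_antitone hq (hg₀ a) (fun T => prod_nonneg fun j _ => hg₀ j T) (hg a)
            fun T U hTU => prod_le_prod (fun j _ => hg₀ j U) fun j _ => hg j hTU

end Harris

section Packing

variable {n : ℕ}

noncomputable def loadAtLeast (c : Fin n → ℝ) (a : ℝ) (T : Finset (Fin n)) : ℝ :=
  ∑ i ∈ T with a ≤ c i, c i

lemma loadAtLeast_mono {c : Fin n → ℝ} (hc : ∀ i, 0 ≤ c i) (a : ℝ) :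
    Monotone (loadAtLeast c a) :=
  fun _ _ hTU => sum_le_sum_of_subset_of_nonneg (filter_subset_filter _ hTU) fun i _ _ => hc i

lemma loadAtLeast_le_sum {c : Fin n → ℝ} (hc : ∀ i, 0 ≤ c i) (a : ℝ) (T : Finset (Fin n)) :
    loadAtLeast c a T ≤ ∑ i ∈ T, c i :=
  sum_le_sum_of_subset_of_nonneg (filter_subset _ _) fun i _ _ => hc i

lemma loadAtLeast_of_mem {c : Fin n → ℝ} {i : Fin n} {T : Finset (Fin n)} (hi : i ∈ T) :
    loadAtLeast c (c i) T = c i + loadAtLeast c (c i) (T.erase i) := by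
  have hiF : i ∈ T.filter (c i ≤ c ·) := mem_filter.2 ⟨hi, le_rfl⟩
  rw [loadAtLeast, loadAtLeast, ← add_sum_erase _ c hiF, filter_erase]

lemma antitone_ite_loadAtLeast_le {c : Fin n → ℝ} (hc : ∀ i, 0 ≤ c i) (a b : ℝ) :
    Antitone fun T => if loadAtLeast c a T ≤ b then (1 : ℝ) else 0 := by
  intro T U hTU
  by_cases hU : loadAtLeast c a U ≤ b
  · simp [hU, (loadAtLeast_mono hc a hTU).trans hU]
  · simp only [hU, if_false]
    split_ifs <;> norm_num

lemma mem_altSet'_iff {m : ℕ} {s : Fin n → Fin m → ℝ} {i : Fin n} {T : Finset (Fin n)} :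
    i ∈ altSet' s T ↔
      i ∈ T ∧ ∀ j, 0 < s i j → loadAtLeast (s · j) (s i j) (T.erase i) ≤ 1 - s i j := by
  refine ⟨fun h => ?_, fun h => ?_⟩ <;> rw [altSet', mem_filter] at *
  · refine ⟨h.1, fun j hj => ?_⟩
    have := h.2 j hj
    rw [← loadAtLeast, loadAtLeast_of_mem (c := (s · j)) h.1] at this
    linarith
  · refine ⟨h.1, fun j hj => ?_⟩
    rw [← loadAtLeast, loadAtLeast_of_mem (c := (s · j)) h.1]
    linarith [h.2 j hj]

lemma sum_altSet'_le_one {m : ℕ} {s : Fin n → Fin m → ℝ} (hs : ∀ i j, 0 ≤ s i j)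
    (T : Finset (Fin n)) (j : Fin m) : ∑ i ∈ altSet' s T, s i j ≤ 1 := by
  set A := (altSet' s T).filter (0 < s · j)
  have hA : ∑ i ∈ A, s i j = ∑ i ∈ altSet' s T, s i j :=
    sum_filter_of_ne fun i _ hne => (hs i j).lt_of_ne' hne
  rw [← hA]
  rcases A.eq_empty_or_nonempty with hempty | hne
  · simp [hempty]
  obtain ⟨i₀, hi₀A, hmin⟩ := exists_min_image A (s · j) hne
  obtain ⟨hi₀, hpos⟩ := mem_filter.1 hi₀A
  refine le_trans (sum_le_sum_of_subset_of_nonneg (fun i hi => ?_) fun i _ _ => hs i j)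
    ((mem_filter.1 hi₀).2 j hpos)
  exact mem_filter.2 ⟨(mem_filter.1 (mem_filter.1 hi).1).1, hmin i hi⟩

end Packing

section Overflow

variable {n : ℕ} {c q : Fin n → ℝ}

lemma sum_filter_lt_le_div (hc : ∀ i, 0 ≤ c i) (hq₀ : ∀ i, 0 ≤ q i) {δ : ℝ} (hδ : 0 < δ) :
    ∑ i with δ < c i, q i ≤ (∑ i, c i * q i) / δ := by
  rw [le_div_iff₀ hδ, sum_mul]
  calc ∑ i with δ < c i, q i * δ ≤ ∑ i with δ < c i, c i * q i :=
        sum_le_sum fun i hi => by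
          rw [mul_comm]
          exact mul_le_mul_of_nonneg_right (mem_filter.1 hi).2.le (hq₀ i)
    _ ≤ ∑ i, c i * q i :=
        sum_le_sum_of_subset_of_nonneg (filter_subset _ _) fun i _ _ => mul_nonneg (hc i) (hq₀ i)

/-- Items of size `≤ 1/2` overflow the remaining capacity `1 - a ≥ 1/2` only if there are at
least two of them. -/
lemma one_le_card_add_half_card_offDiag_of_overflow {a δ : ℝ} (hδa : δ < a) (ha : a ≤ 1)
    {T : Finset (Fin n)} (hT : 1 - a < loadAtLeast c a T) :
    1 ≤ ((T.filter (1 / 2 < c ·)).card : ℝ) + 1 / 2 * ((T.filter (δ < c ·)).offDiag.card : ℝ) := by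
  set H := T.filter (a ≤ c ·)
  have hoffDiag : (0 : ℝ) ≤ 1 / 2 * ((T.filter (δ < c ·)).offDiag.card : ℝ) := by positivity
  by_cases hbig : ∃ i ∈ H, 1 / 2 < c i
  · obtain ⟨i, hiH, hi⟩ := hbig
    have : 1 ≤ (T.filter (1 / 2 < c ·)).card :=
      card_pos.2 ⟨i, mem_filter.2 ⟨(mem_filter.1 hiH).1, hi⟩⟩
    have : (1 : ℝ) ≤ (T.filter (1 / 2 < c ·)).card := by exact_mod_cast this
    linarith
  push Not at hbig
  have hH : 2 ≤ H.card := by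
    by_contra! hH
    rcases H.eq_empty_or_nonempty with hempty | ⟨i, hi⟩
    · have : loadAtLeast c a T = 0 := by
        change ∑ i ∈ H, c i = 0
        rw [hempty, sum_empty]
      linarith
    · have hload : loadAtLeast c a T ≤ H.card • (1 / 2 : ℝ) := sum_le_card_nsmul _ _ _ hbig
      have hcard : (H.card : ℝ) ≤ 1 := by exact_mod_cast Nat.le_of_lt_succ hH
      have : a ≤ 1 / 2 := (mem_filter.1 hi).2.trans (hbig i hi)
      rw [nsmul_eq_mul] at hload
      nlinarith
  have hsub : H ⊆ T.filter (δ < c ·) := fun i hi =>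
    mem_filter.2 ⟨(mem_filter.1 hi).1, hδa.trans_le (mem_filter.1 hi).2⟩
  have hpairs : 2 ≤ (T.filter (δ < c ·)).offDiag.card := by
    refine le_trans ?_ (card_le_card (offDiag_mono hsub))
    rw [offDiag_card]
    exact Nat.le_sub_of_add_le (by nlinarith)
  have : (2 : ℝ) ≤ (T.filter (δ < c ·)).offDiag.card := by exact_mod_cast hpairs
  have : (0 : ℝ) ≤ (T.filter (1 / 2 < c ·)).card := by positivity
  linarith

lemma exV_overflow_le (hq : ∀ i, q i ∈ Set.Icc (0 : ℝ) 1) (hc : ∀ i, 0 ≤ c i) {K ε a : ℝ}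
    (hLP : ∑ i, c i * q i ≤ 1 / K) (hbig : ∑ i with 1 / 2 < c i, q i ≤ 1 / K)
    (hε₀ : 0 < ε) (hε₁ : ε ≤ 1) (hεK : ε ^ 3 * K = 2) (ha : a ≤ 1) :
    exV q (fun T => if 1 - a < loadAtLeast c a T then 1 else 0) ≤ 1 / K * (1 + ε) := by
  have hK : 0 < K := pos_of_mul_pos_right (hεK ▸ two_pos) (by positivity)
  rcases le_or_gt a (ε / 2) with hsmall | hlarge
  · have hden : 0 < 1 - ε / 2 := by linarith
    calc _ ≤ exV q (fun T => (1 - ε / 2)⁻¹ * ∑ i ∈ T, c i) := by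
          refine exV_ite_le_exV hq
            (fun T => mul_nonneg (inv_nonneg.2 hden.le) (sum_nonneg fun i _ => hc i))
            fun T hT => ?_
          rw [← div_eq_inv_mul, le_div_iff₀ hden, one_mul]
          linarith [loadAtLeast_le_sum hc a T]
      _ ≤ (1 - ε / 2)⁻¹ * (1 / K) := by
          rw [exV_const_mul, exV_sum_mem]
          exact mul_le_mul_of_nonneg_left hLP (inv_nonneg.2 hden.le)
      _ ≤ 1 / K * (1 + ε) := by
          rw [inv_mul_le_iff₀ hden]
          have : 0 < 1 / K := by positivity
          nlinarith [mul_nonneg this.le (mul_nonneg hε₀.le (sub_nonneg.2 hε₁))]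
  · have hmedium : ∑ i with ε / 2 < c i, q i ≤ 2 / (ε * K) :=
      calc ∑ i with ε / 2 < c i, q i ≤ (∑ i, c i * q i) / (ε / 2) :=
            sum_filter_lt_le_div hc (fun i => (hq i).1) (by positivity)
        _ ≤ 1 / K / (ε / 2) := div_le_div_of_nonneg_right hLP (by positivity)
        _ = 2 / (ε * K) := by field_simp
    calc _ ≤ exV q (fun T => ((T.filter (1 / 2 < c ·)).card : ℝ)
              + 1 / 2 * ((T.filter (ε / 2 < c ·)).offDiag.card : ℝ)) :=
          exV_ite_le_exV hq (fun T => by positivity)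
            fun T hT => one_le_card_add_half_card_offDiag_of_overflow hlarge ha hT
      _ ≤ 1 / K + 1 / 2 * (2 / (ε * K)) ^ 2 := by
          rw [exV_add, exV_const_mul, exV_card_filter]
          refine add_le_add hbig (mul_le_mul_of_nonneg_left ?_ (by norm_num))
          exact (exV_card_offDiag_filter_le hq _).trans
            (pow_le_pow_left₀ (sum_nonneg fun i _ => (hq i).1) hmedium 2)
      _ = 1 / K * (1 + ε) := by
          field_simp
          linear_combination -hεK

lemma two_div_rpow_one_third {K : ℝ} (hK : 2 ≤ K) :
    0 < (2 / K) ^ ((1 : ℝ) / 3) ∧ (2 / K) ^ ((1 : ℝ) / 3) ≤ 1 ∧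
      ((2 / K) ^ ((1 : ℝ) / 3)) ^ 3 * K = 2 := by
  have h2K : 0 ≤ 2 / K := by positivity
  refine ⟨by positivity, Real.rpow_le_one h2K (by rw [div_le_one] <;> linarith) (by norm_num), ?_⟩
  have h := Real.rpow_inv_natCast_pow (n := 3) h2K (by norm_num)
  rw [show ((2 / K) ^ ((1 : ℝ) / 3)) ^ 3 = 2 / K by simpa [one_div] using h]
  field_simp

end Overflow

section Rounding

variable {n m : ℕ} {s : Fin n → Fin m → ℝ} {q : Fin n → ℝ}

lemma ite_mem_altSet' (i : Fin n) (T : Finset (Fin n)) :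
    (if i ∈ altSet' s T then (1 : ℝ) else 0) =
      if i ∈ T then ∏ j with 0 < s i j,
        (if loadAtLeast (s · j) (s i j) (T.erase i) ≤ 1 - s i j then 1 else 0) else 0 := by
  by_cases hi : i ∈ T <;> simp [mem_altSet'_iff, prod_boole, hi]

lemma mul_pow_le_exV_mem_altSet' (hq : ∀ i, q i ∈ Set.Icc (0 : ℝ) 1) (hs : ∀ i j, 0 ≤ s i j)
    {k : ℕ} {p : ℝ} (hp₀ : 0 ≤ p) (hp₁ : p ≤ 1) (i : Fin n)
    (hsparse : (univ.filter (0 < s i ·)).card ≤ k)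
    (hoverflow : ∀ j, exV q (fun T => if 1 - s i j < loadAtLeast (s · j) (s i j) T then 1 else 0)
      ≤ p) :
    q i * (1 - p) ^ k ≤ exV q (fun T => if i ∈ altSet' s T then 1 else 0) := by
  set N := univ.filter (0 < s i ·)
  set room : Fin m → Finset (Fin n) → ℝ :=
    fun j T => if loadAtLeast (s · j) (s i j) T ≤ 1 - s i j then 1 else 0
  have hroom₀ : ∀ j, 0 ≤ room j := fun j T => by
    simp only [room]
    split_ifs <;> norm_num
  have hroom : ∀ j, Antitone (room j) := fun j => antitone_ite_loadAtLeast_le (hs · j) _ _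
  have hroom_exV : ∀ j, 1 - p ≤ exV q (room j) := fun j => by
    have := exV_ite_add_exV_ite_not (q := q)
      (fun T => loadAtLeast (s · j) (s i j) T ≤ 1 - s i j)
    simp only [not_le] at this
    linarith [hoverflow j]
  have hq₀ := (hq i).1
  calc q i * (1 - p) ^ k ≤ q i * ∏ j ∈ N, exV q (room j) := by
        refine mul_le_mul_of_nonneg_left ?_ hq₀
        calc (1 - p) ^ k ≤ (1 - p) ^ N.card :=
              pow_le_pow_of_le_one (by linarith) (by linarith) hsparse
          _ = ∏ j ∈ N, (1 - p) := (prod_const _).symm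
          _ ≤ _ := prod_le_prod (fun _ _ => by linarith) fun j _ => hroom_exV j
    _ ≤ q i * exV q (fun T => ∏ j ∈ N, room j T) :=
        mul_le_mul_of_nonneg_left (prod_exV_le_exV_prod_of_antitone hq N hroom₀ hroom) hq₀
    _ ≤ q i * exV q (fun T => ∏ j ∈ N, room j (T.erase i)) :=
        mul_le_mul_of_nonneg_left (exV_mono hq fun T => prod_le_prod (fun j _ => hroom₀ j T)
          fun j _ => hroom j (erase_subset i T)) hq₀
    _ = exV q (fun T => if i ∈ altSet' s T then 1 else 0) := by
        rw [← exV_ite_mem_erase i fun U => ∏ j ∈ N, room j U]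
        congr 1
        ext T
        exact (ite_mem_altSet' i T).symm

end Rounding

/-- randomized rounding (with probabilities `x i / k`) followed by
alteration always yields a feasible set, and the expected weight is at least
`(1/k)·(1 - (1/k)(1 + (2/k)^{1/3}))^k` times the strengthened-LP value; as
`k → ∞` this gives an `(ek + o(k))`-approximation. -/
theorem ek_approximation (n m k : ℕ) (hk : 2 ≤ k) (s : Fin n → Fin m → ℝ)
    (hs : ∀ i j, s i j ∈ Set.Icc (0:ℝ) 1)
    (hsparse : ∀ i, ((univ : Finset (Fin m)).filter (fun j => 0 < s i j)).card ≤ k)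
    (x : Fin n → ℝ) (hx : ∀ i, x i ∈ Set.Icc (0:ℝ) 1)
    (hLP : ∀ j, ∑ i, s i j * x i ≤ 1)
    (hLPbig : ∀ j, ∑ i ∈ univ.filter (fun i => 1/2 < s i j), x i ≤ 1)
    (w : Fin n → ℝ) (hw : ∀ i, 0 ≤ w i)
    (q : Fin n → ℝ) (hq : ∀ i, q i = x i / k) :
    (∀ T : Finset (Fin n), ∀ j : Fin m, ∑ i ∈ altSet' s T, s i j ≤ 1) ∧
    exV q (fun T => ∑ i ∈ altSet' s T, w i)
      ≥ (1 / k) * (1 - (1 / (k:ℝ)) * (1 + (2 / (k:ℝ)) ^ ((1:ℝ)/3)))^k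
          * ∑ i, w i * x i := by
  have hK : (2 : ℝ) ≤ k := by exact_mod_cast hk
  obtain ⟨hε₀, hε₁, hεK⟩ := two_div_rpow_one_third hK
  set ε : ℝ := (2 / (k : ℝ)) ^ ((1 : ℝ) / 3)
  have hq' : ∀ i, q i ∈ Set.Icc (0 : ℝ) 1 := fun i => by
    rw [hq]
    exact ⟨div_nonneg (hx i).1 (by positivity), by rw [div_le_one] <;> linarith [(hx i).2]⟩
  have hs₀ : ∀ i j, 0 ≤ s i j := fun i j => (hs i j).1
  refine ⟨sum_altSet'_le_one hs₀, ?_⟩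
  have hp₁ : 1 / k * (1 + ε) ≤ 1 := by
    rw [one_div_mul_eq_div, div_le_one (by linarith)]
    linarith
  have hLP' : ∀ j, ∑ i, s i j * q i ≤ 1 / k := fun j => by
    simp only [hq, mul_div_assoc', ← sum_div]
    exact div_le_div_of_nonneg_right (hLP j) (by positivity)
  have hLPbig' : ∀ j, ∑ i with 1 / 2 < s i j, q i ≤ 1 / k := fun j => by
    simp only [hq, ← sum_div]
    exact div_le_div_of_nonneg_right (hLPbig j) (by positivity)
  have hitem : ∀ i, q i * (1 - 1 / k * (1 + ε)) ^ k
      ≤ exV q (fun T => if i ∈ altSet' s T then 1 else 0) := fun i =>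
    mul_pow_le_exV_mem_altSet' hq' hs₀ (by positivity) hp₁ i (hsparse i) fun j =>
      exV_overflow_le hq' (hs₀ · j) (hLP' j) (hLPbig' j) hε₀ hε₁ hεK (hs i j).2
  rw [ge_iff_le, exV_sum_finset, mul_sum]
  refine sum_le_sum fun i _ => ?_
  calc _ = w i * (q i * (1 - 1 / k * (1 + ε)) ^ k) := by rw [hq]; ring
    _ ≤ _ := mul_le_mul_of_nonneg_left (hitem i) (hw i)
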